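/- Let p_i = softmax_τ(x_i) and p_j = softmax_τ(x_j) be temperature-scaled softmax distributions of arbitrary real vectors x_i, x_j on a finite type, with τ > 0. Then KL(p_i‖p_j) is finite, and moreover KL(p_i‖p_j) ≤ (1/τ)·(max_a (x_i(a) − x_j(a)) − min_a (x_i(a) − x_j(a))), i.e., the KL divergence between softmax outputs is bounded by the range of the scaled logit difference. -/
import Mathlib


theorem kl_softmax_le_logit_range {α : Type*} [Fintype α] [Nonempty α]
    (τ : ℝ) (hτ : 0 < τ) (xi xj : α → ℝ) :
    (∑ a, (Real.exp (xi a / τ) / (∑ b, Real.exp (xi b / τ))) *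
        Real.log ((Real.exp (xi a / τ) / (∑ b, Real.exp (xi b / τ)))
          / (Real.exp (xj a / τ) / (∑ b, Real.exp (xj b / τ)))))
      ≤ (1 / τ) * ((Finset.univ.sup' Finset.univ_nonempty fun a => xi a - xj a)
          - (Finset.univ.inf' Finset.univ_nonempty fun a => xi a - xj a)) := by
  set Si := ∑ b, Real.exp (xi b / τ) with hSi
  set Sj := ∑ b, Real.exp (xj b / τ) with hSj
  have hSi_pos : 0 < Si := Finset.sum_pos (fun b _ => Real.exp_pos _) Finset.univ_nonempty
  have hSj_pos : 0 < Sj := Finset.sum_pos (fun b _ => Real.exp_pos _) Finset.univ_nonempty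
  set M := Finset.univ.sup' Finset.univ_nonempty fun a => xi a - xj a with hM
  set m := Finset.univ.inf' Finset.univ_nonempty fun a => xi a - xj a with hm
  have hlog : ∀ a : α, Real.log ((Real.exp (xi a / τ) / Si) / (Real.exp (xj a / τ) / Sj))
      = (xi a - xj a) / τ + (Real.log Sj - Real.log Si) := by
    intro a
    rw [Real.log_div (by positivity) (by positivity),
      Real.log_div (Real.exp_ne_zero _) hSi_pos.ne',
      Real.log_div (Real.exp_ne_zero _) hSj_pos.ne', Real.log_exp, Real.log_exp]
    ring
  have hsum1 : ∑ a, Real.exp (xi a / τ) / Si = 1 := by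
    rw [← Finset.sum_div]; exact div_self hSi_pos.ne'
  simp_rw [hlog, mul_add, Finset.sum_add_distrib, ← Finset.sum_mul, hsum1, one_mul]
  have h1 : ∑ a, Real.exp (xi a / τ) / Si * ((xi a - xj a) / τ) ≤ M / τ := by
    calc ∑ a, Real.exp (xi a / τ) / Si * ((xi a - xj a) / τ)
        ≤ ∑ a, Real.exp (xi a / τ) / Si * (M / τ) := by
          apply Finset.sum_le_sum
          intro a _
          apply mul_le_mul_of_nonneg_left _ (by positivity)
          have : xi a - xj a ≤ M := Finset.le_sup' (fun a => xi a - xj a) (Finset.mem_univ a)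
          gcongr
      _ = M / τ := by rw [← Finset.sum_mul, hsum1, one_mul]
  have h2 : Real.log Sj - Real.log Si ≤ -(m / τ) := by
    have hle : Sj ≤ Si * Real.exp (-(m / τ)) := by
      rw [hSi, hSj, Finset.sum_mul]
      apply Finset.sum_le_sum
      intro b _
      rw [← Real.exp_add]
      apply Real.exp_le_exp.2
      have h : m ≤ xi b - xj b := Finset.inf'_le (fun a => xi a - xj a) (Finset.mem_univ b)
      have : m / τ ≤ (xi b - xj b) / τ := by gcongr
      rw [sub_div] at this
      linarith
    have := Real.log_le_log hSj_pos hle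
    rw [Real.log_mul hSi_pos.ne' (Real.exp_ne_zero _), Real.log_exp] at this
    linarith
  have : M / τ + -(m / τ) = 1 / τ * (M - m) := by ring
  linarith
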